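/- arXiv:0910.0518 — 3 statements merged into one kernel-verified Lean document; each statement's English description precedes it below -/
import Mathlib

section
/- The linear scattering operator L defined by Lf(v) = ∫_{−1}^1 s(v,v')(f(v') − f(v)) dv', with symmetric kernel s satisfying 0 < s_m ≤ s(v,v') ≤ s_M and ∫_{−1}^1 s(v,v')dv' = 1, satisfies ⟨φ Lφ⟩ ≤ −2 s_m ⟨φ²⟩ for every φ ∈ L²([−1,1]) with ⟨φ⟩ = 0, where ⟨h⟩ = (1/2)∫_{−1}^1 h(v)dv. -/
/-!
Writing `A = ∫∫ s(v,v') φ(v) (φ(v') - φ(v))` and exchanging `v ↔ v'`, the symmetry of `s` gives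
`2A = -∫∫ s(v,v') (φ(v') - φ(v))²`. Bounding `s` below by `s_m` leaves
`∫∫ (φ(v') - φ(v))² = 2 (|I| ∫ φ² - (∫ φ)²)` on `I = [-1, 1]`, and the mean of `φ` vanishes.
-/

open MeasureTheory Set

section SymmetricKernel

variable {α : Type*} [MeasurableSpace α] {μ : Measure α} {s : α → α → ℝ}

theorem ae_prod_restrict_mem {β : Type*} [MeasurableSpace β] {ν : Measure β}
    [SFinite μ] [SFinite ν] {S : Set α} {T : Set β} (hS : MeasurableSet S) (hT : MeasurableSet T) :
    ∀ᵐ z ∂(μ.restrict S).prod (ν.restrict T), z.1 ∈ S ∧ z.2 ∈ T := by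
  rw [Measure.prod_restrict]
  exact ae_restrict_mem (hS.prod hT)

theorem integral_prod_kernel_mul_swap [SFinite μ]
    (hs_symm : ∀ᵐ z ∂μ.prod μ, s z.1 z.2 = s z.2 z.1) (F : α × α → ℝ) :
    ∫ z, s z.1 z.2 * F z.swap ∂μ.prod μ = ∫ z, s z.1 z.2 * F z ∂μ.prod μ := by
  rw [integral_congr_ae (hs_symm.mono fun z hz => by rw [hz])]
  exact integral_prod_swap fun z => s z.1 z.2 * F z

variable [IsFiniteMeasure μ] {f : α → ℝ}

theorem integral_prod_sub_sq (hf : MemLp f 2 μ) :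
    ∫ z, (f z.2 - f z.1) ^ 2 ∂μ.prod μ
      = 2 * (μ.real univ * ∫ x, f x ^ 2 ∂μ - (∫ x, f x ∂μ) ^ 2) := by
  have hsq₁ : Integrable (fun z : α × α => f z.1 ^ 2) (μ.prod μ) := (hf.comp_fst μ).integrable_sq
  have hsq₂ : Integrable (fun z : α × α => f z.2 ^ 2) (μ.prod μ) := (hf.comp_snd μ).integrable_sq
  have hcross : Integrable (fun z : α × α => f z.1 * f z.2) (μ.prod μ) :=
    (hf.integrable one_le_two).mul_prod (hf.integrable one_le_two)
  have hexpand : (fun z : α × α => (f z.2 - f z.1) ^ 2)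
      = fun z => (f z.2 ^ 2 + f z.1 ^ 2) - 2 * (f z.1 * f z.2) := by
    funext z; ring
  have hsq : Integrable (fun z : α × α => f z.2 ^ 2 + f z.1 ^ 2) (μ.prod μ) := hsq₂.add hsq₁
  rw [hexpand, integral_sub hsq (hcross.const_mul 2), integral_add hsq₂ hsq₁,
    integral_const_mul, integral_prod_mul f f]
  have hmarginal₁ := integral_prod_mul (μ := μ) (ν := μ) (fun x => f x ^ 2) (fun _ => (1 : ℝ))
  have hmarginal₂ := integral_prod_mul (μ := μ) (ν := μ) (fun _ => (1 : ℝ)) (fun y => f y ^ 2)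
  simp only [mul_one, one_mul, integral_const, smul_eq_mul] at hmarginal₁ hmarginal₂
  rw [hmarginal₁, hmarginal₂]
  ring

theorem integral_mul_integral_kernel_mul_sub {C : ℝ}
    (hs_meas : AEStronglyMeasurable (Function.uncurry s) (μ.prod μ))
    (hs_bdd : ∀ᵐ z ∂μ.prod μ, |s z.1 z.2| ≤ C)
    (hs_symm : ∀ᵐ z ∂μ.prod μ, s z.1 z.2 = s z.2 z.1) (hf : MemLp f 2 μ) :
    ∫ x, f x * ∫ y, s x y * (f y - f x) ∂μ ∂μ
      = -(1 / 2) * ∫ z, s z.1 z.2 * (f z.2 - f z.1) ^ 2 ∂μ.prod μ := by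
  set F : α × α → ℝ := fun z => f z.1 * (f z.2 - f z.1)
  have h₁ := hf.comp_fst μ
  have h₂ := hf.comp_snd μ
  have hsF : Integrable (fun z => s z.1 z.2 * F z) (μ.prod μ) :=
    (h₁.integrable_mul (h₂.sub h₁)).bdd_mul hs_meas hs_bdd
  have hsF_swap : Integrable (fun z => s z.1 z.2 * F z.swap) (μ.prod μ) :=
    (h₂.integrable_mul (h₁.sub h₂)).bdd_mul hs_meas hs_bdd
  have hiterated : ∫ x, f x * ∫ y, s x y * (f y - f x) ∂μ ∂μ = ∫ z, s z.1 z.2 * F z ∂μ.prod μ := by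
    rw [← integral_integral (f := fun x y => s x y * F (x, y)) hsF]
    refine integral_congr_ae (Filter.Eventually.of_forall fun x => ?_)
    simp only [F, ← integral_const_mul]
    ring_nf
  have hsum : ∫ z, s z.1 z.2 * F z ∂μ.prod μ + ∫ z, s z.1 z.2 * F z.swap ∂μ.prod μ
      = -∫ z, s z.1 z.2 * (f z.2 - f z.1) ^ 2 ∂μ.prod μ := by
    rw [← integral_add hsF hsF_swap, ← integral_neg]
    congr 1 with z
    simp only [F, Prod.fst_swap, Prod.snd_swap]
    ring
  rw [integral_prod_kernel_mul_swap hs_symm] at hsum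
  linarith

theorem integral_mul_integral_kernel_mul_sub_le {c C : ℝ}
    (hs_meas : AEStronglyMeasurable (Function.uncurry s) (μ.prod μ))
    (hs_bdd : ∀ᵐ z ∂μ.prod μ, |s z.1 z.2| ≤ C)
    (hs_symm : ∀ᵐ z ∂μ.prod μ, s z.1 z.2 = s z.2 z.1)
    (hs_ge : ∀ᵐ z ∂μ.prod μ, c ≤ s z.1 z.2) (hf : MemLp f 2 μ) :
    ∫ x, f x * ∫ y, s x y * (f y - f x) ∂μ ∂μ
      ≤ -c * (μ.real univ * ∫ x, f x ^ 2 ∂μ - (∫ x, f x ∂μ) ^ 2) := by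
  have hΔ := (hf.comp_snd μ).sub (hf.comp_fst μ) |>.integrable_sq
  have hlower : c * ∫ z, (f z.2 - f z.1) ^ 2 ∂μ.prod μ
      ≤ ∫ z, s z.1 z.2 * (f z.2 - f z.1) ^ 2 ∂μ.prod μ := by
    rw [← integral_const_mul]
    refine integral_mono_ae (hΔ.const_mul c) (hΔ.bdd_mul hs_meas hs_bdd) ?_
    filter_upwards [hs_ge] with z hz
    exact mul_le_mul_of_nonneg_right hz (sq_nonneg _)
  rw [integral_mul_integral_kernel_mul_sub hs_meas hs_bdd hs_symm hf]
  rw [integral_prod_sub_sq hf] at hlower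
  linarith

end SymmetricKernel

theorem scattering_spectral_gap_general (s : ℝ → ℝ → ℝ) (sm sM : ℝ)
    (hs_meas : Measurable (Function.uncurry s))
    (hs_symm : ∀ v v', v ∈ Set.Icc (-1 : ℝ) 1 → v' ∈ Set.Icc (-1 : ℝ) 1 →
      s v v' = s v' v)
    (hbound : ∀ v v', v ∈ Set.Icc (-1 : ℝ) 1 → v' ∈ Set.Icc (-1 : ℝ) 1 →
      sm ≤ s v v' ∧ s v v' ≤ sM)
    (φ : ℝ → ℝ)
    (hφ : MemLp φ 2 (volume.restrict (Set.Icc (-1 : ℝ) 1)))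
    (hφavg : (1 / 2) * ∫ v in (-1 : ℝ)..1, φ v = 0) :
    (1 / 2) * ∫ v in (-1 : ℝ)..1,
        φ v * (∫ v' in (-1 : ℝ)..1, s v v' * (φ v' - φ v))
      ≤ -(2 * sm) * ((1 / 2) * ∫ v in (-1 : ℝ)..1, (φ v) ^ 2) := by
  simp only [intervalIntegral.integral_of_le (by norm_num : (-1 : ℝ) ≤ 1)] at hφavg ⊢
  set μ := volume.restrict (Ioc (-1 : ℝ) 1)
  have hmem : ∀ᵐ z ∂μ.prod μ, z.1 ∈ Icc (-1 : ℝ) 1 ∧ z.2 ∈ Icc (-1 : ℝ) 1 := by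
    filter_upwards [ae_prod_restrict_mem measurableSet_Ioc measurableSet_Ioc] with z hz
    exact ⟨Ioc_subset_Icc_self hz.1, Ioc_subset_Icc_self hz.2⟩
  have hgap := integral_mul_integral_kernel_mul_sub_le (μ := μ) (C := max |sm| |sM|)
    hs_meas.aestronglyMeasurable
    (hmem.mono fun z hz => abs_le_max_abs_abs (hbound _ _ hz.1 hz.2).1 (hbound _ _ hz.1 hz.2).2)
    (hmem.mono fun z hz => hs_symm _ _ hz.1 hz.2)
    (hmem.mono fun z hz => (hbound _ _ hz.1 hz.2).1)
    (hφ.mono_measure (Measure.restrict_mono Ioc_subset_Icc_self le_rfl))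
  have hμ : μ.real univ = 2 := by norm_num [μ]
  rw [hμ, show ∫ v, φ v ∂μ = 0 by linarith] at hgap
  linarith

/-- spectral gap estimate ⟨φLφ⟩ ≤ −2s_m⟨φ²⟩ for ⟨φ⟩ = 0, where
Lf(v) = ∫_{-1}^1 s(v,v')(f(v') − f(v))dv' with symmetric kernel s,
0 < s_m ≤ s ≤ s_M, ∫_{-1}^1 s(v,v')dv' = 1, and ⟨h⟩ = (1/2)∫_{-1}^1 h. -/
theorem scattering_spectral_gap (s : ℝ → ℝ → ℝ) (sm sM : ℝ)
    (hs_meas : Measurable (Function.uncurry s))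
    (hs_symm : ∀ v v', v ∈ Set.Icc (-1 : ℝ) 1 → v' ∈ Set.Icc (-1 : ℝ) 1 →
      s v v' = s v' v)
    (hsm : 0 < sm)
    (hbound : ∀ v v', v ∈ Set.Icc (-1 : ℝ) 1 → v' ∈ Set.Icc (-1 : ℝ) 1 →
      sm ≤ s v v' ∧ s v v' ≤ sM)
    (hnorm : ∀ v ∈ Set.Icc (-1 : ℝ) 1, (∫ v' in (-1 : ℝ)..1, s v v') = 1)
    (φ : ℝ → ℝ)
    (hφ : MemLp φ 2 (volume.restrict (Set.Icc (-1 : ℝ) 1)))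
    (hφavg : (1 / 2) * ∫ v in (-1 : ℝ)..1, φ v = 0) :
    (1 / 2) * ∫ v in (-1 : ℝ)..1,
        φ v * (∫ v' in (-1 : ℝ)..1, s v v' * (φ v' - φ v))
      ≤ -(2 * sm) * ((1 / 2) * ∫ v in (-1 : ℝ)..1, (φ v) ^ 2) :=
  scattering_spectral_gap_general s sm sM hs_meas hs_symm hbound φ hφ hφavg
end

section
/- The micro-macro AP scheme preserves the zero velocity-average of the microscopic part: if ⟨g⁰_{i+1/2}⟩ = 0 for all i, then ⟨gⁿ_{i+1/2}⟩ = 0 for all n and i, where gⁿ⁺¹ is defined from gⁿ, ρⁿ by the update gⁿ⁺¹_{i+1/2} = gⁿ_{i+1/2} − (Δt/(εΔx))(I−⟨·⟩)(v⁺(gⁿ_{i+1/2}−gⁿ_{i−1/2}) + v⁻(gⁿ_{i+3/2}−gⁿ_{i+1/2})) − (Δtσ_{i+1/2}/ε²)Lgⁿ⁺¹_{i+1/2} − (Δt/ε²)v(ρⁿ_{i+1}−ρⁿ_i)/Δx, assuming ⟨L h⟩ = 0 for all h. -/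
open MeasureTheory

/-- the micro-macro AP scheme preserves the zero velocity average
of g: if ⟨g⁰_{i+1/2}⟩ = 0 for all i, then ⟨gⁿ_{i+1/2}⟩ = 0 for all n, i.
Here g n i stands for gⁿ_{i+1/2}, ⟨h⟩ = (1/2)∫_{-1}^1 h(v)dv, and L is a linear
operator on functions of v with ⟨Lh⟩ = 0. -/
theorem scheme_preserves_zero_average
    (ε Δt Δx : ℝ) (hε : 0 < ε) (hΔt : 0 < Δt) (hΔx : 0 < Δx)
    (L : (ℝ → ℝ) → (ℝ → ℝ))
    (hL : ∀ h : ℝ → ℝ, (1 / 2) * ∫ v in (-1 : ℝ)..1, L h v = 0)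
    (σ : ℤ → ℝ) (ρ : ℕ → ℤ → ℝ) (g : ℕ → ℤ → ℝ → ℝ)
    (hint : ∀ (n : ℕ) (i : ℤ), IntervalIntegrable (g n i) volume (-1) 1)
    (hintL : ∀ (n : ℕ) (i : ℤ), IntervalIntegrable (L (g n i)) volume (-1) 1)
    (hupdate : ∀ (n : ℕ) (i : ℤ) (v : ℝ), v ∈ Set.Icc (-1 : ℝ) 1 →
      g (n + 1) i v
        = g n i v
          - (Δt / (ε * Δx)) *
              ((((v + |v|) / 2) * (g n i v - g n (i - 1) v)
                  + ((v - |v|) / 2) * (g n (i + 1) v - g n i v))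
                - (1 / 2) * ∫ w in (-1 : ℝ)..1,
                    (((w + |w|) / 2) * (g n i w - g n (i - 1) w)
                      + ((w - |w|) / 2) * (g n (i + 1) w - g n i w)))
          - (Δt * σ i / ε ^ 2) * L (g (n + 1) i) v
          - (Δt / ε ^ 2) * v * ((ρ n (i + 1) - ρ n i) / Δx))
    (hinit : ∀ i : ℤ, (1 / 2) * ∫ v in (-1 : ℝ)..1, g 0 i v = 0) :
    ∀ (n : ℕ) (i : ℤ), (1 / 2) * ∫ v in (-1 : ℝ)..1, g n i v = 0 := by

  intro n
  induction n with
  | zero => exact hinit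
  | succ n ih =>
    intro i
    have h1 : (-1:ℝ) ≤ 1 := by norm_num
    set Φ : ℝ → ℝ := fun w => ((w + |w|) / 2) * (g n i w - g n (i - 1) w)
        + ((w - |w|) / 2) * (g n (i + 1) w - g n i w) with hΦ
    have hΦint : IntervalIntegrable Φ volume (-1) 1 := by
      apply IntervalIntegrable.add
      · exact ((hint n i).sub (hint n (i-1))).continuousOn_mul (by fun_prop)
      · exact ((hint n (i+1)).sub (hint n i)).continuousOn_mul (by fun_prop)
    set c : ℝ := (1/2) * ∫ w in (-1:ℝ)..1, Φ w with hc
    have heq : Set.EqOn (g (n+1) i)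
        (fun v => g n i v - (Δt / (ε * Δx)) * (Φ v - c)
          - (Δt * σ i / ε ^ 2) * L (g (n + 1) i) v
          - (Δt / ε ^ 2) * v * ((ρ n (i + 1) - ρ n i) / Δx))
        (Set.uIcc (-1:ℝ) 1) := by
      intro v hv
      rw [Set.uIcc_of_le h1] at hv
      simpa [Φ, c] using hupdate n i v hv
    rw [intervalIntegral.integral_congr heq]
    have hA := hint n i
    have hB : IntervalIntegrable (fun v => (Δt / (ε * Δx)) * (Φ v - c)) volume (-1) 1 :=
      (hΦint.sub intervalIntegrable_const).const_mul _
    have hC : IntervalIntegrable (fun v => (Δt * σ i / ε ^ 2) * L (g (n + 1) i) v) volume (-1) 1 :=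
      (hintL (n+1) i).const_mul _
    have hD : IntervalIntegrable (fun v => (Δt / ε ^ 2) * v * ((ρ n (i + 1) - ρ n i) / Δx)) volume (-1) 1 := by
      apply Continuous.intervalIntegrable; fun_prop
    rw [intervalIntegral.integral_sub ((hA.sub hB).sub hC) hD,
        intervalIntegral.integral_sub (hA.sub hB) hC,
        intervalIntegral.integral_sub hA hB,
        intervalIntegral.integral_const_mul, intervalIntegral.integral_const_mul,
        intervalIntegral.integral_sub hΦint intervalIntegrable_const,
        intervalIntegral.integral_const]
    have hLval : (∫ v in (-1:ℝ)..1, L (g (n+1) i) v) = 0 := by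
      have := hL (g (n+1) i); linarith
    have hDval : (∫ v in (-1:ℝ)..1, (Δt / ε ^ 2) * v * ((ρ n (i + 1) - ρ n i) / Δx)) = 0 := by
      have heq2 : (fun v : ℝ => (Δt / ε ^ 2) * v * ((ρ n (i + 1) - ρ n i) / Δx))
          = fun v => ((Δt / ε ^ 2) * ((ρ n (i + 1) - ρ n i) / Δx)) * v := by
        funext v; ring
      rw [heq2, intervalIntegral.integral_const_mul, integral_id]
      norm_num
    have hgn : (∫ v in (-1:ℝ)..1, g n i v) = 0 := by
      have := ih i; linarith
    rw [hLval, hDval, hgn]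
    simp only [smul_eq_mul]
    rw [hc]
    ring
end

section
/- Second-order accuracy of the one-sided difference at the midpoint: if φ ∈ H³(ℝ), then Σ_{i∈ℤ} |(φ(x_{i+1}) − φ(x_i))/Δx − φ'(x_{i+1/2})|² Δx ≤ (Δx⁴/320) ‖φ'''‖²_{L²(ℝ)}, where x_i = iΔx and x_{i+1/2} = (i+1/2)Δx. -/
/-! On a cell `[a, b]` of length `h` with midpoint `m`, expanding `φ a` and `φ b` around `m` to
second order with integral remainder gives
`h * ((φ b - φ a) / h - φ' m) = R₁ + R₂` with the remainders
`R₁ = ∫ s in a..m, (a - s)² / 2 * φ''' s` and `R₂ = ∫ s in m..b, (b - s)² / 2 * φ''' s`.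
Cauchy–Schwarz bounds the square of each remainder by `(h / 2)⁵ / 20` times the `L²` mass of
`φ'''` on its half cell, and `(R₁ + R₂)² ≤ 2 (R₁² + R₂²)` gives the constant `h⁴ / 320` per cell.
The cells `(i Δx, (i + 1) Δx]` tile `ℝ`, so summing over `i` gives the global bound. -/

open MeasureTheory Set

theorem integral_mul_sq_le {α : Type*} [MeasurableSpace α] {μ : Measure α} {f g : α → ℝ}
    (hf : MemLp f 2 μ) (hg : MemLp g 2 μ) :
    (∫ x, f x * g x ∂μ) ^ 2 ≤ (∫ x, f x ^ 2 ∂μ) * ∫ x, g x ^ 2 ∂μ := by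
  have inner_toLp {u v : α → ℝ} (hu : MemLp u 2 μ) (hv : MemLp v 2 μ) :
      inner ℝ (hu.toLp u) (hv.toLp v) = ∫ x, u x * v x ∂μ := by
    rw [L2.inner_def]
    refine integral_congr_ae ?_
    filter_upwards [hu.coeFn_toLp, hv.coeFn_toLp] with x hux hvx
    simp [hux, hvx, mul_comm]
  simpa only [inner_toLp, sq] using real_inner_mul_inner_self_le (hf.toLp f) (hg.toLp g)

theorem hasSum_intervalIntegral_int_mul {E : Type*} [NormedAddCommGroup E] [NormedSpace ℝ E]
    {μ : Measure ℝ} {f : ℝ → E} (hf : Integrable f μ) {p : ℝ} (hp : 0 < p) :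
    HasSum (fun n : ℤ => ∫ x in n * p..(n + 1) * p, f x ∂μ) (∫ x, f x ∂μ) := by
  simp_rw [intervalIntegral.integral_of_le
    (mul_le_mul_of_nonneg_right (le_add_of_nonneg_right zero_le_one) hp.le)]
  rw [← setIntegral_univ, ← iUnion_Ioc_zsmul hp]
  simpa only [zsmul_eq_mul, Int.cast_add, Int.cast_one] using
    hasSum_integral_iUnion (fun _ => measurableSet_Ioc) (pairwise_disjoint_Ioc_zsmul p)
      hf.integrableOn

theorem integral_taylor_remainder_two {φ φ' φ'' φ''' : ℝ → ℝ} {u v : ℝ} (c : ℝ)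
    (hd1 : ∀ x ∈ uIcc u v, HasDerivAt φ (φ' x) x)
    (hd2 : ∀ x ∈ uIcc u v, HasDerivAt φ' (φ'' x) x)
    (hd3 : ∀ x ∈ uIcc u v, HasDerivAt φ'' (φ''' x) x)
    (hφ''' : IntervalIntegrable φ''' volume u v) :
    ∫ s in u..v, (c - s) ^ 2 / 2 * φ''' s
      = ((c - v) ^ 2 / 2 * φ'' v + (c - v) * φ' v + φ v)
        - ((c - u) ^ 2 / 2 * φ'' u + (c - u) * φ' u + φ u) := by
  have hkernel : Continuous fun s : ℝ => (c - s) ^ 2 / 2 := by fun_prop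
  refine intervalIntegral.integral_eq_sub_of_hasDerivAt
    (f := fun t => (c - t) ^ 2 / 2 * φ'' t + (c - t) * φ' t + φ t) (fun s hs => ?_)
    (hφ'''.continuousOn_mul hkernel.continuousOn)
  have hlin : HasDerivAt (fun t : ℝ => c - t) (-1) s := (hasDerivAt_id s).const_sub c
  have hsq : HasDerivAt (fun t : ℝ => (c - t) ^ 2 / 2) (-(c - s)) s :=
    ((hlin.fun_pow 2).div_const 2).congr_deriv (by norm_num; ring)
  exact (((hsq.mul (hd3 s hs)).add (hlin.mul (hd2 s hs))).add (hd1 s hs)).congr_deriv (by ring)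

theorem integral_sub_sq_div_two_sq (c u v : ℝ) :
    ∫ s in u..v, ((c - s) ^ 2 / 2) ^ 2 = ((v - c) ^ 5 - (u - c) ^ 5) / 20 := by
  have hpoly (s : ℝ) : ((c - s) ^ 2 / 2) ^ 2 = (s - c) ^ 4 / 4 := by ring
  simp_rw [hpoly, intervalIntegral.integral_div]
  rw [intervalIntegral.integral_comp_sub_right (fun y : ℝ => y ^ 4) c, integral_pow]
  ring

theorem sq_integral_taylor_kernel_mul_le {g : ℝ → ℝ} {u v : ℝ} (c : ℝ) (huv : u ≤ v)
    (hg : MemLp g 2 (volume.restrict (Ioc u v))) :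
    (∫ s in u..v, (c - s) ^ 2 / 2 * g s) ^ 2
      ≤ ((v - c) ^ 5 - (u - c) ^ 5) / 20 * ∫ s in u..v, g s ^ 2 := by
  have hkernel : Continuous fun s : ℝ => (c - s) ^ 2 / 2 := by fun_prop
  have hkernel_memLp : MemLp (fun s : ℝ => (c - s) ^ 2 / 2) 2 (volume.restrict (Ioc u v)) :=
    (memLp_two_iff_integrable_sq hkernel.aestronglyMeasurable).2
      (hkernel.pow 2).integrableOn_Ioc
  rw [← integral_sub_sq_div_two_sq]
  simp only [intervalIntegral.integral_of_le huv]
  exact integral_mul_sq_le hkernel_memLp hg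

theorem sq_midpoint_difference_error_mul_le {φ φ' φ'' φ''' : ℝ → ℝ} {a h : ℝ} (hh : 0 < h)
    (hd1 : ∀ x ∈ Icc a (a + h), HasDerivAt φ (φ' x) x)
    (hd2 : ∀ x ∈ Icc a (a + h), HasDerivAt φ' (φ'' x) x)
    (hd3 : ∀ x ∈ Icc a (a + h), HasDerivAt φ'' (φ''' x) x)
    (hφ''' : MemLp φ''' 2 (volume.restrict (Ioc a (a + h)))) :
    ((φ (a + h) - φ a) / h - φ' (a + h / 2)) ^ 2 * h
      ≤ h ^ 4 / 320 * ∫ x in a..a + h, φ''' x ^ 2 := by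
  set m := a + h / 2 with hm
  set b := a + h with hb
  have ham : a ≤ m := by linarith
  have hmb : m ≤ b := by linarith
  have hφ'''_left : MemLp φ''' 2 (volume.restrict (Ioc a m)) :=
    hφ'''.mono_measure (Measure.restrict_mono (Ioc_subset_Ioc_right hmb) le_rfl)
  have hφ'''_right : MemLp φ''' 2 (volume.restrict (Ioc m b)) :=
    hφ'''.mono_measure (Measure.restrict_mono (Ioc_subset_Ioc_left ham) le_rfl)
  have taylor (c : ℝ) {u v : ℝ} (huv : u ≤ v) (hsub : Icc u v ⊆ Icc a b)
      (hint : MemLp φ''' 2 (volume.restrict (Ioc u v))) :=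
    integral_taylor_remainder_two c (φ := φ)
      (fun x hx => hd1 x (hsub (uIcc_of_le huv ▸ hx)))
      (fun x hx => hd2 x (hsub (uIcc_of_le huv ▸ hx)))
      (fun x hx => hd3 x (hsub (uIcc_of_le huv ▸ hx)))
      ((intervalIntegrable_iff_integrableOn_Ioc_of_le huv).2 (hint.integrable one_le_two))
  set R₁ := ∫ s in a..m, (a - s) ^ 2 / 2 * φ''' s with hR₁_def
  set R₂ := ∫ s in m..b, (b - s) ^ 2 / 2 * φ''' s with hR₂_def
  have hR : R₁ + R₂ = φ b - φ a - h * φ' m := by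
    rw [hR₁_def, hR₂_def, taylor a ham (Icc_subset_Icc_right hmb) hφ'''_left,
      taylor b hmb (Icc_subset_Icc_left ham) hφ'''_right]
    ring
  have hR₁ : R₁ ^ 2 ≤ h ^ 5 / 640 * ∫ x in a..m, φ''' x ^ 2 := by
    convert sq_integral_taylor_kernel_mul_le a ham hφ'''_left using 2; ring
  have hR₂ : R₂ ^ 2 ≤ h ^ 5 / 640 * ∫ x in m..b, φ''' x ^ 2 := by
    convert sq_integral_taylor_kernel_mul_le b hmb hφ'''_right using 2; ring
  have hsplit : ∫ x in a..b, φ''' x ^ 2 = (∫ x in a..m, φ''' x ^ 2) + ∫ x in m..b, φ''' x ^ 2 :=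
    (intervalIntegral.integral_add_adjacent_intervals
      ((intervalIntegrable_iff_integrableOn_Ioc_of_le ham).2 hφ'''_left.integrable_sq)
      ((intervalIntegrable_iff_integrableOn_Ioc_of_le hmb).2 hφ'''_right.integrable_sq)).symm
  have hE : (φ b - φ a) / h - φ' m = (R₁ + R₂) / h := by
    rw [hR]; field_simp
  calc ((φ b - φ a) / h - φ' m) ^ 2 * h = (R₁ + R₂) ^ 2 / h := by
        rw [hE]; field_simp
    _ ≤ 2 * (R₁ ^ 2 + R₂ ^ 2) / h := by gcongr; nlinarith [sq_nonneg (R₁ - R₂)]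
    _ ≤ 2 * (h ^ 5 / 640 * (∫ x in a..m, φ''' x ^ 2) + h ^ 5 / 640 * ∫ x in m..b, φ''' x ^ 2)
          / h := by gcongr
    _ = h ^ 4 / 320 * ∫ x in a..b, φ''' x ^ 2 := by
        rw [hsplit]; field_simp; ring

/-- for φ ∈ H³(ℝ) (φ, φ', φ'' continuously differentiable with
φ''' ∈ L²(ℝ)), the one-sided difference quotient is second-order accurate at the
midpoint: Σ_i |(φ(x_{i+1}) − φ(x_i))/Δx − φ'(x_{i+1/2})|² Δx
  ≤ (Δx⁴/320)‖φ'''‖²_{L²(ℝ)}, with x_i = iΔx, x_{i+1/2} = (i+1/2)Δx. -/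
theorem midpoint_difference_second_order
    (Δx : ℝ) (hΔx : 0 < Δx)
    (φ φ' φ'' φ''' : ℝ → ℝ)
    (hd1 : ∀ x : ℝ, HasDerivAt φ (φ' x) x)
    (hd2 : ∀ x : ℝ, HasDerivAt φ' (φ'' x) x)
    (hd3 : ∀ x : ℝ, HasDerivAt φ'' (φ''' x) x)
    (h3 : MemLp φ''' 2 volume) :
    ∑' i : ℤ, |(φ ((i + 1) * Δx) - φ (i * Δx)) / Δx - φ' ((i + 1 / 2) * Δx)| ^ 2
        * Δx
      ≤ (Δx ^ 4 / 320) * ∫ x : ℝ, (φ''' x) ^ 2 := by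
  have hcells := (hasSum_intervalIntegral_int_mul h3.integrable_sq hΔx).mul_left (Δx ^ 4 / 320)
  have hcell (i : ℤ) :
      |(φ ((i + 1) * Δx) - φ (i * Δx)) / Δx - φ' ((i + 1 / 2) * Δx)| ^ 2 * Δx
        ≤ Δx ^ 4 / 320 * ∫ x in i * Δx..(i + 1) * Δx, φ''' x ^ 2 := by
    have hright : ((i : ℝ) + 1) * Δx = i * Δx + Δx := by ring
    have hmid : ((i : ℝ) + 1 / 2) * Δx = i * Δx + Δx / 2 := by ring
    rw [hright, hmid, sq_abs]
    exact sq_midpoint_difference_error_mul_le hΔx (fun x _ => hd1 x) (fun x _ => hd2 x)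
      (fun x _ => hd3 x) (h3.restrict _)
  have hsummable := hcells.summable.of_nonneg_of_le (fun i => by positivity) hcell
  rw [← hcells.tsum_eq]
  exact hsummable.tsum_le_tsum hcell hcells.summable
end
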